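/- Let P be an STPPU with semi-convex preference functions over the fuzzy semiring and let α_min be the minimum preference assigned by any preference function on any constraint of P. If the STPU α_min-Cut(P) is not Strongly Controllable, then P is not α-Strongly Controllable for any preference level α ≥ 0, and in particular P is not Optimally Strongly Controllable. -/

import Mathlib

open scoped Classical

/-- A Simple Temporal Problem with Preferences and Uncertainty (STPPU) over the
fuzzy semiring `⟨[0,1], max, min, 0, 1⟩`.  `E` is the (finite) set of executable
time-points, `C` the (finite) set of contingent time-points, `R` indexes the soft
requirement constraints.  Each requirement constraint `r` relates the pair
`(rSrc r, rTgt r)` and consists of an interval `rI r` of allowed values for the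
difference together with a preference function `rf r`.  Each contingent
time-point `c` is the endpoint of exactly one soft contingent constraint, going
from the executable `cBase c` to `c`, with interval `cI c` and preference
function `cf c`. -/
structure STPPU where
  E : Type
  C : Type
  R : Type
  [eFin : Fintype E]
  [cFin : Fintype C]
  [rFin : Fintype R]
  rSrc : R → E ⊕ C
  rTgt : R → E ⊕ C
  rI : R → Set ℝ
  rf : R → ℝ → ℝ
  cBase : C → E
  cI : C → Set ℝ
  cf : C → ℝ → ℝ

attribute [instance] STPPU.eFin STPPU.cFin STPPU.rFin

namespace STPPU

variable (P : STPPU)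

/-- A schedule: a complete assignment of times to all time-points. -/
abbrev Schedule := (P.E ⊕ P.C) → ℝ

/-- The difference induced by a schedule on requirement constraint `r`. -/
def rdiff (s : P.Schedule) (r : P.R) : ℝ := s (P.rTgt r) - s (P.rSrc r)

/-- The duration induced by a schedule on the contingent constraint ending at `c`. -/
def cdiff (s : P.Schedule) (c : P.C) : ℝ := s (Sum.inr c) - s (Sum.inl (P.cBase c))

/-- A situation: durations for all contingent constraints. -/
abbrev Situation := P.C → ℝ

/-- `ω` is a situation of `P`: each contingent duration lies in its interval. -/
def IsSituation (ω : P.Situation) : Prop := ∀ c, ω c ∈ P.cI c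

/-- The schedule `s` induces the durations `ω` on the contingent constraints. -/
def Induces (s : P.Schedule) (ω : P.Situation) : Prop := ∀ c, P.cdiff s c = ω c

/-- `s` satisfies all requirement constraints. -/
def ReqSat (s : P.Schedule) : Prop := ∀ r, P.rdiff s r ∈ P.rI r

/-- `s` is a solution of the projection `P_ω`. -/
def IsSolution (ω : P.Situation) (s : P.Schedule) : Prop :=
  P.Induces s ω ∧ P.ReqSat s

/-- Global preference of a schedule: the minimum, over all (requirement and
contingent) constraints, of the preference of the induced difference. -/
noncomputable def pref (s : P.Schedule) : ℝ :=
  sInf ((Set.range fun r => P.rf r (P.rdiff s r)) ∪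
        (Set.range fun c => P.cf c (P.cdiff s c)))

/-- `opt(P_ω)`: the maximal preference of a solution of the projection `P_ω`. -/
noncomputable def opt (ω : P.Situation) : ℝ :=
  sSup (P.pref '' {s | P.IsSolution ω s})

/-- `s` is an optimal solution of the projection `P_ω`. -/
def IsOptSolution (ω : P.Situation) (s : P.Schedule) : Prop :=
  P.IsSolution ω s ∧ P.pref s = P.opt ω

/-- A strategy: a map from situations (projections) to schedules. -/
abbrev Strategy := P.Situation → P.Schedule

/-- A strategy is viable if it maps every projection to one of its solutions
(in particular, the schedule induces the durations of the situation). -/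
def Viable (S : P.Strategy) : Prop := ∀ ω, P.IsSituation ω → P.IsSolution ω (S ω)

/-- The history `[s]_{<x}` of the executable `x` in schedule `s`: the durations of
the contingent events that finish before the execution of `x`. -/
noncomputable def history (s : P.Schedule) (x : P.E) : P.C → Option ℝ :=
  fun c => if s (Sum.inr c) < s (Sum.inl x) then some (P.cdiff s c) else none

/-- The strategy assigns the same value to every executable time-point in all
projections. -/
def SameExec (S : P.Strategy) : Prop :=
  ∀ ω₁ ω₂, P.IsSituation ω₁ → P.IsSituation ω₂ →
    ∀ x : P.E, S ω₁ (Sum.inl x) = S ω₂ (Sum.inl x)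

/-- A dynamic strategy: the value of each executable depends only on its history. -/
def Dynamic (S : P.Strategy) : Prop :=
  ∀ ω₁ ω₂, P.IsSituation ω₁ → P.IsSituation ω₂ → ∀ x : P.E,
    P.history (S ω₁) x = P.history (S ω₂) x → S ω₁ (Sum.inl x) = S ω₂ (Sum.inl x)

/-- Optimal Strong Controllability. -/
def OSC : Prop :=
  ∃ S : P.Strategy, P.Viable S ∧ P.SameExec S ∧
    ∀ ω, P.IsSituation ω → P.IsOptSolution ω (S ω)

/-- Optimal Dynamic Controllability. -/
def ODC : Prop :=
  ∃ S : P.Strategy, P.Viable S ∧ P.Dynamic S ∧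
    ∀ ω, P.IsSituation ω → P.IsOptSolution ω (S ω)

/-- Optimal Weak Controllability. -/
def OWC : Prop := ∀ ω, P.IsSituation ω → ∃ s, P.IsOptSolution ω s

/-- `α`-Strong Controllability. -/
def alphaSC (α : ℝ) : Prop :=
  ∃ S : P.Strategy, P.Viable S ∧ P.SameExec S ∧
    (∀ ω, P.IsSituation ω → P.opt ω ≤ α → P.IsOptSolution ω (S ω)) ∧
    (∀ ω, P.IsSituation ω → ¬ P.opt ω ≤ α → α ≤ P.pref (S ω))

/-- `α`-Dynamic Controllability. -/
def alphaDC (α : ℝ) : Prop :=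
  ∃ S : P.Strategy, P.Viable S ∧ P.Dynamic S ∧
    (∀ ω, P.IsSituation ω → P.opt ω ≤ α → P.IsOptSolution ω (S ω)) ∧
    (∀ ω, P.IsSituation ω → ¬ P.opt ω ≤ α → α ≤ P.pref (S ω))

/-- `s` is a solution of the whole problem `P`. -/
def SolP (s : P.Schedule) : Prop := (∀ c, P.cdiff s c ∈ P.cI c) ∧ P.ReqSat s

/-- `opt = max_{T ∈ Sol(P)} pref(T)`: the maximal global preference of a solution. -/
noncomputable def optAll : ℝ := sSup (P.pref '' {s | P.SolP s})

/-- All preference functions map into `[0,1]` (fuzzy semiring). -/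
def WellFormed : Prop :=
  (∀ r, ∀ x ∈ P.rI r, P.rf r x ∈ Set.Icc (0:ℝ) 1) ∧
  (∀ c, ∀ x ∈ P.cI c, P.cf c x ∈ Set.Icc (0:ℝ) 1)

/-- Semi-convexity of all preference functions: for every threshold `y`, the set
of interval elements with preference at least `y` is an interval. -/
def SemiConvexPrefs : Prop :=
  (∀ r, ∀ y : ℝ, Set.OrdConnected {x | x ∈ P.rI r ∧ y ≤ P.rf r x}) ∧
  (∀ c, ∀ y : ℝ, Set.OrdConnected {x | x ∈ P.cI c ∧ y ≤ P.cf c x})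

/-- All preferences assigned by `P` belong to the finite set `L` of preference
levels (the discretization of `[0,1]`). -/
def LevelsIn (L : Finset ℝ) : Prop :=
  (∀ r, ∀ x ∈ P.rI r, P.rf r x ∈ L) ∧ (∀ c, ∀ x ∈ P.cI c, P.cf c x ∈ L)

/-- `α_min`: the minimum preference assigned on any constraint of `P`. -/
noncomputable def alphaMin : ℝ :=
  sInf {p | (∃ r, ∃ x ∈ P.rI r, P.rf r x = p) ∨ (∃ c, ∃ x ∈ P.cI c, P.cf c x = p)}

/-- `s` satisfies the requirement constraints of the STPU `β-Cut(P)`. -/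
def CutReqSat (β : ℝ) (s : P.Schedule) : Prop :=
  ∀ r, P.rdiff s r ∈ P.rI r ∧ β ≤ P.rf r (P.rdiff s r)

/-- `s` is a solution of the STPU `β-Cut(P)` viewed as an STP. -/
def CutSol (β : ℝ) (s : P.Schedule) : Prop :=
  P.CutReqSat β s ∧ ∀ c, P.cdiff s c ∈ P.cI c ∧ β ≤ P.cf c (P.cdiff s c)

/-- The interval of the contingent constraint `c` in the minimal network
`PC(β-Cut(P))`: exactly the values taking part in at least one solution. -/
def PCContI (β : ℝ) (c : P.C) : Set ℝ := {d | ∃ s, P.CutSol β s ∧ P.cdiff s c = d}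

/-- The interval of the requirement constraint `r` in the minimal network
`PC(β-Cut(P))`. -/
def PCReqI (β : ℝ) (r : P.R) : Set ℝ := {d | ∃ s, P.CutSol β s ∧ P.rdiff s r = d}

/-- `PC(β-Cut(P))` is consistent, i.e. `β-Cut(P)` viewed as an STP has a solution. -/
def PCConsistent (β : ℝ) : Prop := ∃ s, P.CutSol β s

/-- `ω` is a situation of the STPU `PC(β-Cut(P))`. -/
def PCSituation (β : ℝ) (ω : P.Situation) : Prop := ∀ c, ω c ∈ P.PCContI β c

/-- `s` is a solution of the projection of `PC(β-Cut(P))` on the situation `ω`. -/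
def PCSol (β : ℝ) (ω : P.Situation) (s : P.Schedule) : Prop :=
  P.Induces s ω ∧ ∀ r, P.rdiff s r ∈ P.PCReqI β r

/-- A control sequence: an assignment to all executable time-points. -/
abbrev Control := P.E → ℝ

/-- The schedule `T_{δ,ω}`: it agrees with `δ` on the executables and induces
the duration `ω c` on every contingent constraint. -/
def sched (δ : P.Control) (ω : P.Situation) : P.Schedule :=
  fun v => match v with
  | Sum.inl e => δ e
  | Sum.inr c => δ (P.cBase c) + ω c

/-- `δ` is a solution of the STP `StronglyControllable(PC(β-Cut(P)))`:
`T_{δ,ω}` is a solution of the projection of `PC(β-Cut(P))` for every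
situation `ω` of `PC(β-Cut(P))`. -/
def SCSol (β : ℝ) (δ : P.Control) : Prop :=
  ∀ ω, P.PCSituation β ω → P.PCSol β ω (P.sched δ ω)

/-- The STPU `PC(β-Cut(P))` is Strongly Controllable. -/
def PCSC (β : ℝ) : Prop := ∃ δ : P.Control, P.SCSol β δ

/-- `ω` is a situation of the STPU `β-Cut(P)`. -/
def CutSituation (β : ℝ) (ω : P.Situation) : Prop :=
  ∀ c, ω c ∈ P.cI c ∧ β ≤ P.cf c (ω c)

/-- The STPU `β-Cut(P)` is Strongly Controllable. -/
def CutSC (β : ℝ) : Prop :=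
  ∃ δ : P.Control, ∀ ω, P.CutSituation β ω → P.CutReqSat β (P.sched δ ω)

/-- The STPU `PC(β-Cut(P))` is Dynamically Controllable: it admits a viable
dynamic strategy. -/
def PCDC (β : ℝ) : Prop :=
  ∃ S : P.Strategy,
    (∀ ω, P.PCSituation β ω → P.PCSol β ω (S ω)) ∧
    (∀ ω₁ ω₂, P.PCSituation β ω₁ → P.PCSituation β ω₂ → ∀ x : P.E,
      P.history (S ω₁) x = P.history (S ω₂) x → S ω₁ (Sum.inl x) = S ω₂ (Sum.inl x))

/-- The STPU `β-Cut(P)` is Dynamically Controllable: it admits a viable dynamic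
strategy. -/
def CutDC (β : ℝ) : Prop :=
  ∃ S : P.Strategy,
    (∀ ω, P.CutSituation β ω → P.Induces (S ω) ω ∧ P.CutReqSat β (S ω)) ∧
    (∀ ω₁ ω₂, P.CutSituation β ω₁ → P.CutSituation β ω₂ → ∀ x : P.E,
      P.history (S ω₁) x = P.history (S ω₂) x → S ω₁ (Sum.inl x) = S ω₂ (Sum.inl x))

end STPPU

/-! Every preference of `P` is at least `α_min`, so `α_min-Cut(P)` imposes exactly the
constraints of `P` itself. Both `α`-strong and optimal strong controllability provide a viable
strategy fixing every executable time-point; those fixed values form a control sequence that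
makes `α_min-Cut(P)` strongly controllable. -/

namespace STPPU

variable {P : STPPU}

theorem bddBelow_prefs (hwf : P.WellFormed) :
    BddBelow {p | (∃ r, ∃ x ∈ P.rI r, P.rf r x = p) ∨ (∃ c, ∃ x ∈ P.cI c, P.cf c x = p)} := by
  refine ⟨0, ?_⟩
  rintro _ (⟨r, x, hx, rfl⟩ | ⟨c, x, hx, rfl⟩)
  · exact (hwf.1 r x hx).1
  · exact (hwf.2 c x hx).1

theorem alphaMin_le_rf (hwf : P.WellFormed) {r : P.R} {x : ℝ} (hx : x ∈ P.rI r) :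
    P.alphaMin ≤ P.rf r x :=
  csInf_le (bddBelow_prefs hwf) (Or.inl ⟨r, x, hx, rfl⟩)

theorem cutReqSat_alphaMin_of_reqSat (hwf : P.WellFormed) {s : P.Schedule} (hs : P.ReqSat s) :
    P.CutReqSat P.alphaMin s :=
  fun r => ⟨hs r, alphaMin_le_rf hwf (hs r)⟩

theorem CutSituation.isSituation {β : ℝ} {ω : P.Situation} (hω : P.CutSituation β ω) :
    P.IsSituation ω :=
  fun c => (hω c).1

theorem sched_eq_of_induces {s : P.Schedule} {ω : P.Situation} (hs : P.Induces s ω) :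
    P.sched (fun e => s (Sum.inl e)) ω = s := by
  funext v
  rcases v with e | c
  · rfl
  · have := hs c
    simp only [sched, cdiff] at this ⊢
    linarith

theorem cutSC_alphaMin_of_viable_sameExec (hwf : P.WellFormed) {S : P.Strategy}
    (hv : P.Viable S) (hse : P.SameExec S) : P.CutSC P.alphaMin := by
  by_cases hex : ∃ ω₀, P.IsSituation ω₀
  · obtain ⟨ω₀, hω₀⟩ := hex
    refine ⟨fun e => S ω₀ (Sum.inl e), fun ω hω => ?_⟩
    have hsit := hω.isSituation
    have hexec : (fun e => S ω₀ (Sum.inl e)) = fun e => S ω (Sum.inl e) :=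
      funext (hse ω₀ ω hω₀ hsit)
    rw [hexec, sched_eq_of_induces (hv ω hsit).1]
    exact cutReqSat_alphaMin_of_reqSat hwf (hv ω hsit).2
  · exact ⟨0, fun ω hω => absurd ⟨ω, hω.isSituation⟩ hex⟩

end STPPU

theorem STPPU.not_SC_of_not_cutSC_general (P : STPPU)
    (hwf : P.WellFormed)
    (hnsc : ¬ P.CutSC P.alphaMin) :
    (∀ α : ℝ, 0 ≤ α → ¬ P.alphaSC α) ∧ ¬ P.OSC := by
  constructor
  · rintro α - ⟨S, hv, hse, -⟩
    exact hnsc (cutSC_alphaMin_of_viable_sameExec hwf hv hse)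
  · rintro ⟨S, hv, hse, -⟩
    exact hnsc (cutSC_alphaMin_of_viable_sameExec hwf hv hse)

/-- Let `α_min` be the minimum preference on any constraint of
the STPPU `P` (with semi-convex preference functions).  If the STPU
`α_min-Cut(P)` is not Strongly Controllable, then `P` is not `α`-Strongly
Controllable for any preference level `α ≥ 0`, and in particular `P` is not
Optimally Strongly Controllable. -/
theorem STPPU.not_SC_of_not_cutSC (P : STPPU)
    (hsc : P.SemiConvexPrefs) (hwf : P.WellFormed)
    (hnsc : ¬ P.CutSC P.alphaMin) :
    (∀ α : ℝ, 0 ≤ α → ¬ P.alphaSC α) ∧ ¬ P.OSC :=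
  STPPU.not_SC_of_not_cutSC_general P hwf hnsc
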